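/- arXiv:2310.04265 — 2 statements merged into one kernel-verified Lean document; each statement's English description precedes it below -/
import Mathlib

section
/- If H₁ and H₂ are two χ⃗-binding tournaments, then the tournament H₁ ⇒ H₂ is also χ⃗-binding. -/
structure Dig (V : Type*) where
  Adj : V → V → Prop
  irrefl : ∀ v, ¬ Adj v v
  asymm : ∀ u v, Adj u v → ¬ Adj v u

structure Tournament (V : Type*) extends Dig V where
  total : ∀ u v, u ≠ v → Adj u v ∨ Adj v u

variable {V : Type*}

/-- The backedge graph of a digraph with respect to a (strict total) order `r`:
`u` and `v` are adjacent iff the arc between them goes backwards with respect to `r`. -/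
def Dig.backedge (D : Dig V) (r : V → V → Prop) : SimpleGraph V where
  Adj u v := (r u v ∧ D.Adj v u) ∨ (r v u ∧ D.Adj u v)
  symm := ⟨by intro u v h; tauto⟩
  loopless := ⟨by intro v h; rcases h with ⟨_, h⟩ | ⟨_, h⟩ <;> exact D.irrefl v h⟩

/-- The clique number of an undirected graph. -/
noncomputable def gOmega (G : SimpleGraph V) : ℕ :=
  sSup {n | ∃ s : Finset V, G.IsNClique n s}

/-- The chromatic number of an undirected graph (as a natural number). -/
noncomputable def gChi (G : SimpleGraph V) : ℕ :=
  sInf {n | G.Colorable n}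

/-- The sub-digraph induced on `S` is acyclic: there is no directed cycle inside `S`. -/
def Dig.AcyclicOn (D : Dig V) (S : Set V) : Prop :=
  ∀ v, ¬ Relation.TransGen (fun x y => x ∈ S ∧ y ∈ S ∧ D.Adj x y) v v

/-- The dichromatic number: the least `n` such that the vertices can be partitioned into
`n` acyclic parts. -/
noncomputable def Dig.dichi (D : Dig V) : ℕ :=
  sInf {n | ∃ c : V → Fin n, ∀ i, D.AcyclicOn {v | c v = i}}

/-- The clique number of a digraph: the minimum over all strict total orders of the
clique number of the associated backedge graph. -/
noncomputable def Dig.cliqueNum (D : Dig V) : ℕ :=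
  sInf {m | ∃ r : V → V → Prop, IsStrictTotalOrder V r ∧ gOmega (D.backedge r) = m}

/-- `T` is `H`-free: no induced subtournament of `T` is isomorphic to `H`. -/
def HFree {W V : Type*} (H : Tournament W) (T : Tournament V) : Prop :=
  ¬ ∃ f : W ↪ V, ∀ a b, H.Adj a b ↔ T.Adj (f a) (f b)

/-- `H` is χ⃗-binding: the class of `H`-free tournaments is χ⃗-bounded. -/
def ChiBinding {W : Type*} (H : Tournament W) : Prop :=
  ∃ f : ℕ → ℕ, ∀ (V : Type) [Fintype V] (T : Tournament V), HFree H T →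
    T.toDig.dichi ≤ f T.toDig.cliqueNum

/-- The tournament `T₁ ⇒ T₂`: disjoint union of `T₁` and `T₂` with all arcs from `T₁` to `T₂`. -/
def Tournament.seq {V₁ V₂ : Type*} (T₁ : Tournament V₁) (T₂ : Tournament V₂) :
    Tournament (V₁ ⊕ V₂) where
  Adj := Sum.Lex T₁.Adj T₂.Adj
  irrefl := by
    rintro (a | a) h
    · rw [Sum.lex_inl_inl] at h; exact T₁.irrefl a h
    · rw [Sum.lex_inr_inr] at h; exact T₂.irrefl a h
  asymm := by
    rintro (a | a) (b | b) h h'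
    · rw [Sum.lex_inl_inl] at h h'; exact T₁.asymm a b h h'
    · exact Sum.lex_inr_inl h'
    · exact Sum.lex_inr_inl h
    · rw [Sum.lex_inr_inr] at h h'; exact T₂.asymm a b h h'
  total := by
    rintro (a | a) (b | b) hne
    · have hab : a ≠ b := fun e => hne (by rw [e])
      exact (T₁.total a b hab).imp Sum.lex_inl_inl.mpr Sum.lex_inl_inl.mpr
    · exact Or.inl (Sum.Lex.sep a b)
    · exact Or.inr (Sum.Lex.sep b a)
    · have hab : a ≠ b := fun e => hne (by rw [e])
      exact (T₂.total a b hab).imp Sum.lex_inr_inr.mpr Sum.lex_inr_inr.mpr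


/-!
Order `V` by a linear order `<` realising `ω⃗(T) = w` and let `x` be the first vertex such that
`{u ≤ x}` cannot be coloured with `f₁ w` acyclic colours. Then `{u < x}` can, so `{u ≤ x}` needs
at most `f₁ w + 1` colours, and `{u ≤ x}` contains a copy `E` of `H₁`. A vertex `v > x` either is
dominated by all of `E`, and these vertices induce an `H₂`-free tournament, or sends a backward
arc `v → E a`. The backward in-neighbourhood of a vertex `c` has clique number `< w`, because `c`
extends each of its backedge cliques, so induction on `w` colours it.
-/

open Set

namespace Dig

variable (D : Dig V)

def induce (S : Set V) : Dig S where
  Adj a b := D.Adj a b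
  irrefl a := D.irrefl a
  asymm a b := D.asymm a b

/-- Colours are natural numbers; only the colours of vertices in `S` matter. -/
def DicolorableOn (S : Set V) (n : ℕ) : Prop :=
  ∃ c : V → ℕ, (∀ v ∈ S, c v < n) ∧ ∀ i, D.AcyclicOn {v ∈ S | c v = i}

variable {D}

theorem AcyclicOn.of_map {V' : Type*} {D' : Dig V'} {S : Set V} {S' : Set V'}
    (h : D'.AcyclicOn S') (f : V → V') (hS : MapsTo f S S')
    (hf : ∀ x ∈ S, ∀ y ∈ S, D.Adj x y → D'.Adj (f x) (f y)) : D.AcyclicOn S := fun v hv =>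
  h (f v) <| Relation.TransGen.lift f
    (fun x y ⟨hx, hy, hxy⟩ => ⟨hS hx, hS hy, hf x hx y hy hxy⟩) v v hv

theorem AcyclicOn.mono {S S' : Set V} (h : D.AcyclicOn S') (hS : S ⊆ S') : D.AcyclicOn S :=
  h.of_map id hS fun _ _ _ _ hxy => hxy

variable (D) in
theorem acyclicOn_of_subsingleton {S : Set V} (hS : S.Subsingleton) : D.AcyclicOn S := by
  intro v hv
  obtain ⟨w, ⟨hv, hw, hvw⟩, -⟩ := Relation.TransGen.head'_iff.mp hv
  exact D.irrefl v (hS hw hv ▸ hvw)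

theorem AcyclicOn.image_val {S : Set V} {K : Set S} (h : (D.induce S).AcyclicOn K) :
    D.AcyclicOn (Subtype.val '' K) := by
  classical
  intro v hv
  obtain ⟨_, ⟨⟨x, -, rfl⟩, -⟩, -⟩ := Relation.TransGen.head'_iff.mp hv
  -- a cycle through `v` is pushed into `S` by a retraction onto `S`
  refine h.of_map (fun u => if hu : u ∈ S then ⟨u, hu⟩ else x) ?_ ?_ _ hv
  · rintro _ ⟨u, hu, rfl⟩
    simpa using hu
  · rintro _ ⟨u, -, rfl⟩ _ ⟨u', -, rfl⟩ huu'
    simpa [induce] using huu'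

theorem DicolorableOn.mono {S S' : Set V} {n m : ℕ} (h : D.DicolorableOn S' n) (hS : S ⊆ S')
    (hn : n ≤ m) : D.DicolorableOn S m := by
  obtain ⟨c, hc, hac⟩ := h
  exact ⟨c, fun v hv => (hc v (hS hv)).trans_le hn,
    fun i => (hac i).mono fun v hv => ⟨hS hv.1, hv.2⟩⟩

variable (D) in
theorem dicolorableOn_empty : D.DicolorableOn ∅ 0 :=
  ⟨fun _ => 0, fun _ hv => hv.elim,
    fun _ => D.acyclicOn_of_subsingleton (subsingleton_empty.anti fun _ hv => hv.1)⟩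

variable (D) in
theorem dicolorableOn_singleton (x : V) : D.DicolorableOn {x} 1 :=
  ⟨fun _ => 0, fun _ _ => Nat.one_pos,
    fun _ => D.acyclicOn_of_subsingleton (subsingleton_singleton.anti fun _ hv => hv.1)⟩

theorem DicolorableOn.union {S₁ S₂ : Set V} {n₁ n₂ : ℕ} (h₁ : D.DicolorableOn S₁ n₁)
    (h₂ : D.DicolorableOn S₂ n₂) : D.DicolorableOn (S₁ ∪ S₂) (n₁ + n₂) := by
  classical
  obtain ⟨c₁, hc₁, hac₁⟩ := h₁
  obtain ⟨c₂, hc₂, hac₂⟩ := h₂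
  refine ⟨fun v => if v ∈ S₁ then c₁ v else n₁ + c₂ v, fun v hv => ?_, fun i => ?_⟩
  · dsimp only
    split_ifs with h
    · exact (hc₁ v h).trans_le (Nat.le_add_right _ _)
    · exact Nat.add_lt_add_left (hc₂ v (hv.resolve_left h)) n₁
  rcases lt_or_ge i n₁ with hi | hi
  · refine (hac₁ i).mono fun v ⟨_, hcv⟩ => ?_
    dsimp only at hcv
    split_ifs at hcv with h
    · exact ⟨h, hcv⟩
    · omega
  · refine (hac₂ (i - n₁)).mono fun v ⟨hv, hcv⟩ => ?_
    dsimp only at hcv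
    split_ifs at hcv with h
    · have := hc₁ v h
      omega
    · exact ⟨hv.resolve_left h, by omega⟩

variable (D) in
theorem dicolorableOn_biUnion {ι : Type*} (s : Finset ι) {S : ι → Set V} {n : ι → ℕ}
    (h : ∀ i ∈ s, D.DicolorableOn (S i) (n i)) :
    D.DicolorableOn (⋃ i ∈ s, S i) (∑ i ∈ s, n i) := by
  classical
  induction s using Finset.induction with
  | empty => simpa using D.dicolorableOn_empty
  | insert a s ha ih =>
    rw [Finset.set_biUnion_insert, Finset.sum_insert ha]
    exact (h a (s.mem_insert_self a)).union (ih fun i hi => h i (Finset.mem_insert_of_mem hi))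

theorem dichi_le_of_dicolorableOn_univ {n : ℕ} (h : D.DicolorableOn univ n) : D.dichi ≤ n := by
  obtain ⟨c, hc, hac⟩ := h
  exact Nat.sInf_le ⟨fun v => ⟨c v, hc v trivial⟩,
    fun i => (hac i).mono fun v hv => ⟨trivial, congrArg Fin.val hv⟩⟩

variable (D) in
theorem exists_dicoloring [Finite V] :
    ∃ c : V → Fin D.dichi, ∀ i, D.AcyclicOn {v | c v = i} := by
  refine Nat.sInf_mem (s := {n | ∃ c : V → Fin n, ∀ i, D.AcyclicOn {v | c v = i}})
    ⟨Nat.card V, Finite.equivFin V, fun _ => D.acyclicOn_of_subsingleton ?_⟩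
  exact fun _ hu _ hv => (Finite.equivFin V).injective (hu.trans hv.symm)

theorem dicolorableOn_of_dichi_induce_le [Finite V] {S : Set V} {n : ℕ}
    (h : (D.induce S).dichi ≤ n) : D.DicolorableOn S n := by
  classical
  obtain ⟨c, hc⟩ := (D.induce S).exists_dicoloring
  refine ⟨fun v => if hv : v ∈ S then c ⟨v, hv⟩ else 0, fun v hv => ?_, fun i => ?_⟩
  · simp only [dif_pos hv]
    exact (c ⟨v, hv⟩).2.trans_le h
  by_cases hi : i < (D.induce S).dichi
  · refine (hc ⟨i, hi⟩).image_val.mono ?_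
    rintro v ⟨hv, rfl⟩
    exact ⟨⟨v, hv⟩, by simp [hv, Fin.ext_iff], rfl⟩
  · refine D.acyclicOn_of_subsingleton fun v ⟨hv, hcv⟩ => absurd ?_ hi
    simp [← hcv, hv]

end Dig

theorem SimpleGraph.cliqueNum_induce_lt [Finite V] (G : SimpleGraph V) {S : Set V} {c : V}
    (hc : ∀ v ∈ S, G.Adj c v) : (G.induce S).cliqueNum < G.cliqueNum := by
  classical
  obtain ⟨t, ht⟩ := (G.induce S).exists_isNClique_cliqueNum
  rw [SimpleGraph.isNClique_induce_iff] at ht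
  have hct := ht.insert (a := c) fun v hv => by
    obtain ⟨u, -, rfl⟩ := Finset.mem_map.mp hv
    exact hc u u.2
  have := hct.isClique.card_le_cliqueNum
  rw [hct.card_eq] at this
  omega

namespace Dig

variable (D : Dig V)

theorem exists_linearOrder_gOmega_backedge_eq :
    ∃ _ : LinearOrder V, gOmega (D.backedge (· < ·)) = D.cliqueNum := by
  classical
  obtain ⟨r, hr, hω⟩ := Nat.sInf_mem (s := {m | ∃ r : V → V → Prop, IsStrictTotalOrder V r ∧
    gOmega (D.backedge r) = m}) ⟨_, WellOrderingRel, inferInstance, rfl⟩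
  exact ⟨linearOrderOfSTO r, hω⟩

variable [LinearOrder V]

theorem cliqueNum_induce_le_cliqueNum_backedge_induce (S : Set V) :
    (D.induce S).cliqueNum ≤ ((D.backedge (· < ·)).induce S).cliqueNum :=
  Nat.sInf_le ⟨(· < ·), inferInstance, rfl⟩

variable [Finite V]

theorem cliqueNum_induce_le_gOmega_backedge (S : Set V) :
    (D.induce S).cliqueNum ≤ gOmega (D.backedge (· < ·)) :=
  (D.cliqueNum_induce_le_cliqueNum_backedge_induce S).trans
    ((D.backedge (· < ·)).cliqueNum_induce_le S)

theorem cliqueNum_induce_lt_gOmega_backedge {S : Set V} (c : V)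
    (hc : ∀ v ∈ S, c < v ∧ D.Adj v c) :
    (D.induce S).cliqueNum < gOmega (D.backedge (· < ·)) :=
  (D.cliqueNum_induce_le_cliqueNum_backedge_induce S).trans_lt
    ((D.backedge (· < ·)).cliqueNum_induce_lt fun v hv => Or.inl (hc v hv))

end Dig

def Tournament.induce (T : Tournament V) (S : Set V) : Tournament S where
  toDig := T.toDig.induce S
  total a b h := T.total a b (Subtype.coe_injective.ne h)

section HFree

variable {W₁ W₂ : Type*} {H₁ : Tournament W₁} {H₂ : Tournament W₂} {T : Tournament V}

theorem HFree.induce (h : HFree H₁ T) (S : Set V) : HFree H₁ (T.induce S) :=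
  fun ⟨f, hf⟩ => h ⟨f.trans (Function.Embedding.subtype _), hf⟩

theorem HFree.induce_forall_adj_of_seq (hT : HFree (H₁.seq H₂) T) (E : W₁ ↪ V)
    (hE : ∀ a b, H₁.Adj a b ↔ T.Adj (E a) (E b)) :
    HFree H₂ (T.induce {v | ∀ a, T.Adj (E a) v}) := by
  rintro ⟨F, hF⟩
  have hEF : ∀ a b, T.Adj (E a) (F b) := fun a b => (F b).2 a
  refine hT ⟨⟨Sum.elim E (Subtype.val ∘ F), E.injective.sumElim
    (Subtype.val_injective.comp F.injective) fun a b h => T.irrefl _ (h ▸ hEF a b)⟩, ?_⟩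
  rintro (a | b) (a' | b')
  · simpa [Tournament.seq] using hE a a'
  · simpa [Tournament.seq] using hEF a b'
  · simpa [Tournament.seq] using T.asymm _ _ (hEF a' b)
  · simpa [Tournament.seq, Tournament.induce, Dig.induce] using hF b b'

end HFree

theorem Antitone.of_forall_Iic [LinearOrder V] {P : Set V → Prop} (hP : Antitone P) (h0 : P ∅)
    {s : Set V} (hs : s.Finite) (h : ∀ y ∈ s, P (Iic y)) : P s := by
  rcases s.eq_empty_or_nonempty with rfl | hne
  · exact h0
  · obtain ⟨y, hy, hmax⟩ := s.exists_max_image id hs hne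
    exact hP (fun v hv => hmax v hv) (h y hy)

theorem Antitone.univ_or_exists_Iio_not_Iic [LinearOrder V] [Finite V] {P : Set V → Prop}
    (hP : Antitone P) (h0 : P ∅) : P univ ∨ ∃ x, P (Iio x) ∧ ¬ P (Iic x) := by
  by_contra! h
  obtain ⟨hU, hstep⟩ := h
  have hIic (x : V) : P (Iic x) := WellFoundedLT.induction x fun x ih =>
    hstep x (hP.of_forall_Iic h0 (toFinite _) ih)
  exact hU (hP.of_forall_Iic h0 (toFinite _) fun y _ => hIic y)

section Seq

variable {W₁ W₂ : Type*} [Fintype W₁] {H₁ : Tournament W₁} {H₂ : Tournament W₂}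

theorem Tournament.dicolorableOn_univ_of_hFree_seq [LinearOrder V] [Finite V]
    (T : Tournament V) (hT : HFree (H₁.seq H₂) T) {n₁ n₂ n₃ : ℕ}
    (h₁ : ∀ S, HFree H₁ (T.induce S) → T.DicolorableOn S n₁)
    (h₂ : ∀ S, HFree H₂ (T.induce S) → T.DicolorableOn S n₂)
    (h₃ : ∀ c, T.DicolorableOn {v | c < v ∧ T.Adj v c} n₃) :
    T.DicolorableOn univ (n₁ + 1 + n₂ + Fintype.card W₁ * n₃) := by
  have hP : Antitone fun S => T.DicolorableOn S n₁ := fun _ _ hS h => h.mono hS le_rfl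
  obtain hU | ⟨x, hIio, hIic⟩ := hP.univ_or_exists_Iio_not_Iic
    (T.dicolorableOn_empty.mono subset_rfl (Nat.zero_le _))
  · exact hU.mono subset_rfl (by omega)
  obtain ⟨e, he⟩ := not_not.mp (mt (h₁ (Iic x)) hIic)
  set E := e.trans (Function.Embedding.subtype _)
  have hcover : univ ⊆ (Iio x ∪ {x}) ∪ {v | ∀ a, T.Adj (E a) v} ∪
      ⋃ a ∈ Finset.univ, {v | E a < v ∧ T.Adj v (E a)} := by
    intro v _
    rcases le_or_gt v x with hvx | hxv
    · left; left; rwa [Iio_union_right]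
    by_cases hQ : ∃ a, E a < v ∧ T.Adj v (E a)
    · exact Or.inr (by simpa using hQ)
    simp only [not_exists, not_and] at hQ
    refine Or.inl (Or.inr fun a => ?_)
    have hav : E a < v := lt_of_le_of_lt (e a).2 hxv
    exact (T.total _ _ hav.ne).resolve_right (hQ a hav)
  have hM := h₂ _ (hT.induce_forall_adj_of_seq E he)
  refine (((hIio.union (T.dicolorableOn_singleton x)).union hM).union
    (T.dicolorableOn_biUnion Finset.univ fun a _ => h₃ (E a))).mono hcover ?_
  simp

/-- Indexed so that `dichiBound f₁ f₂ k w` bounds tournaments of clique number `< w`. -/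
def dichiBound (f₁ f₂ : ℕ → ℕ) (k : ℕ) : ℕ → ℕ
  | 0 => 0
  | w + 1 => f₁ w + 1 + f₂ w + k * dichiBound f₁ f₂ k w

theorem dichi_le_dichiBound {f₁ f₂ : ℕ → ℕ} (hf₁ : Monotone f₁) (hf₂ : Monotone f₂)
    (hb₁ : ∀ (V : Type) [Fintype V] (T : Tournament V), HFree H₁ T →
      T.toDig.dichi ≤ f₁ T.toDig.cliqueNum)
    (hb₂ : ∀ (V : Type) [Fintype V] (T : Tournament V), HFree H₂ T →
      T.toDig.dichi ≤ f₂ T.toDig.cliqueNum) (w : ℕ) :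
    ∀ {V : Type} [Finite V] (T : Tournament V), HFree (H₁.seq H₂) T →
      T.toDig.cliqueNum < w → T.toDig.dichi ≤ dichiBound f₁ f₂ (Fintype.card W₁) w := by
  induction w with
  | zero => exact fun _ _ hw => absurd hw (Nat.not_lt_zero _)
  | succ w ih =>
    intro V _ T hT hw
    obtain ⟨_, hω⟩ := T.exists_linearOrder_gOmega_backedge_eq
    have hS (S : Set V) : (T.induce S).cliqueNum ≤ w :=
      (T.cliqueNum_induce_le_gOmega_backedge S).trans (by omega)
    refine Dig.dichi_le_of_dicolorableOn_univ
      (Tournament.dicolorableOn_univ_of_hFree_seq T hT (fun S hS₁ => ?_) (fun S hS₂ => ?_)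
        fun c => ?_)
    · have := Fintype.ofFinite S
      exact Dig.dicolorableOn_of_dichi_induce_le ((hb₁ S _ hS₁).trans (hf₁ (hS S)))
    · have := Fintype.ofFinite S
      exact Dig.dicolorableOn_of_dichi_induce_le ((hb₂ S _ hS₂).trans (hf₂ (hS S)))
    · have hQ : (T.induce {v | c < v ∧ T.Adj v c}).cliqueNum < w :=
        (T.cliqueNum_induce_lt_gOmega_backedge c fun v hv => hv).trans_le (by omega)
      exact Dig.dicolorableOn_of_dichi_induce_le (ih _ (hT.induce _) hQ)

end Seq

theorem ChiBinding.exists_monotone {W : Type*} {H : Tournament W} (h : ChiBinding H) :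
    ∃ f : ℕ → ℕ, Monotone f ∧ ∀ (V : Type) [Fintype V] (T : Tournament V), HFree H T →
      T.toDig.dichi ≤ f T.toDig.cliqueNum := by
  obtain ⟨f, hf⟩ := h
  refine ⟨fun n => (Finset.range (n + 1)).sup f, fun m n hmn => Finset.sup_mono ?_,
    fun V _ T hT => (hf V T hT).trans (Finset.le_sup (by simp))⟩
  exact Finset.range_subset_range.mpr (by omega)

theorem stmt_14_general (W₁ W₂ : Type) [Fintype W₁]
    (H₁ : Tournament W₁) (H₂ : Tournament W₂)
    (h₁ : ChiBinding H₁) (h₂ : ChiBinding H₂) : ChiBinding (H₁.seq H₂) := by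
  obtain ⟨f₁, hf₁, hb₁⟩ := h₁.exists_monotone
  obtain ⟨f₂, hf₂, hb₂⟩ := h₂.exists_monotone
  exact ⟨fun n => dichiBound f₁ f₂ (Fintype.card W₁) (n + 1),
    fun V _ T hT => dichi_le_dichiBound hf₁ hf₂ hb₁ hb₂ _ T hT (Nat.lt_succ_self _)⟩

/-- If `H₁` and `H₂` are χ⃗-binding, then so is `H₁ ⇒ H₂`. -/
theorem stmt_14 (W₁ W₂ : Type) [Fintype W₁] [Fintype W₂]
    (H₁ : Tournament W₁) (H₂ : Tournament W₂)
    (h₁ : ChiBinding H₁) (h₂ : ChiBinding H₂) : ChiBinding (H₁.seq H₂) :=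
  stmt_14_general W₁ W₂ H₁ H₂ h₁ h₂
end

section
/- Let H be a tournament. The class of H-free tournaments is χ⃗-bounded if and only if the class of ordered undirected graphs containing no ordered backedge graph of H as an induced ordered subgraph is χ-bounded (i.e., there exists a function f such that χ(G) ≤ f(ω(G)) for every ordered graph (G, ≺) in that class). -/
variable {V : Type*}

/-- The ordered graph `(G, r)` contains the ordered graph `(G', r')` as an induced ordered
subgraph. -/
def OrderedContains {W V : Type*} (G' : SimpleGraph W) (r' : W → W → Prop)
    (G : SimpleGraph V) (r : V → V → Prop) : Prop :=
  ∃ φ : W ↪ V, (∀ a b, r' a b ↔ r (φ a) (φ b)) ∧ (∀ a b, G'.Adj a b ↔ G.Adj (φ a) (φ b))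

/-!
Both directions go through backedge graphs. A tournament is recovered from a vertex order `r`
and its backedge graph, so `T` is `H`-free iff `(T^r, r)` avoids every ordered backedge graph of
`H`; and every ordered graph `(G, r)` is `(T^r, r)` for the tournament that reverses exactly the
edges of `G`. Colour classes of `T^r` are acyclic, whence `χ⃗(T) ≤ χ(T^r)`. Conversely, on an
acyclic set the backward pairs of `r` form a transitive relation, so there `T^r` is a
comparability graph, hence `ω(T^r)`-colourable; thus `χ(T^r) ≤ χ⃗(T) · ω(T^r)`.
-/

section Graph

variable [Fintype V]

lemma gOmega_bddAbove (G : SimpleGraph V) : BddAbove {n | ∃ s : Finset V, G.IsNClique n s} :=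
  ⟨Fintype.card V, fun _ ⟨s, hs⟩ => hs.card_eq ▸ s.card_le_univ⟩

lemma SimpleGraph.IsNClique.le_gOmega {G : SimpleGraph V} {n : ℕ} {s : Finset V}
    (h : G.IsNClique n s) : n ≤ gOmega G :=
  le_csSup (gOmega_bddAbove G) ⟨s, h⟩

lemma gOmega_mono {G G' : SimpleGraph V} (h : G ≤ G') : gOmega G ≤ gOmega G' :=
  csSup_le' fun _ ⟨_, hs⟩ => (hs.mono h).le_gOmega

lemma colorable_gChi (G : SimpleGraph V) : G.Colorable (gChi G) :=
  Nat.sInf_mem (s := {n | G.Colorable n}) ⟨Fintype.card V, G.colorable_of_fintype⟩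

end Graph

lemma gChi_le_of_colorable {G : SimpleGraph V} {n : ℕ} (h : G.Colorable n) : gChi G ≤ n :=
  Nat.sInf_le h

lemma SimpleGraph.colorable_mul_of_colorable_sameClass {G : SimpleGraph V} {k m : ℕ}
    (c : V → Fin k) (h : (G ⊓ SimpleGraph.fromRel fun u v => c u = c v).Colorable m) :
    G.Colorable (k * m) := by
  obtain ⟨C⟩ := h
  let C' : G.Coloring (Fin k × Fin m) := SimpleGraph.Coloring.mk (fun v => (c v, C v)) <| by
    intro u v huv heq
    obtain ⟨hc, hC⟩ := Prod.mk.inj heq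
    exact C.valid ⟨huv, huv.ne, Or.inl hc⟩ hC
  simpa using C'.colorable

section CliqueHeight

variable (G : SimpleGraph V) (r : V → V → Prop)

noncomputable def cliqueHeight (v : V) : ℕ :=
  sSup {n | ∃ s : Finset V, G.IsNClique n s ∧ ∀ x ∈ s, r x v ∧ G.Adj x v}

variable [Fintype V] {G r}

lemma bddAbove_cliqueHeight (v : V) :
    BddAbove {n | ∃ s : Finset V, G.IsNClique n s ∧ ∀ x ∈ s, r x v ∧ G.Adj x v} :=
  BddAbove.mono (fun _ ⟨s, hs, _⟩ ↦ (⟨s, hs⟩ : ∃ s : Finset V, G.IsNClique _ s))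
    (gOmega_bddAbove G)

lemma exists_isNClique_cliqueHeight (v : V) :
    ∃ s : Finset V, G.IsNClique (cliqueHeight G r v) s ∧ ∀ x ∈ s, r x v ∧ G.Adj x v :=
  Nat.sSup_mem (s := {n | ∃ s : Finset V, G.IsNClique n s ∧ ∀ x ∈ s, r x v ∧ G.Adj x v})
    ⟨0, ∅, by simp⟩ (bddAbove_cliqueHeight v)

lemma cliqueHeight_lt_gOmega (v : V) : cliqueHeight G r v < gOmega G := by
  classical
  obtain ⟨s, hs, hbelow⟩ := exists_isNClique_cliqueHeight (G := G) (r := r) v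
  exact (hs.insert fun x hx => (hbelow x hx).2.symm).le_gOmega

lemma cliqueHeight_lt_of_adj [IsTrans V r]
    (htrans : ∀ x y z, r x y → r y z → G.Adj x y → G.Adj y z → G.Adj x z)
    {u v : V} (huv : r u v) (hadj : G.Adj u v) : cliqueHeight G r u < cliqueHeight G r v := by
  classical
  obtain ⟨s, hs, hbelow⟩ := exists_isNClique_cliqueHeight (G := G) (r := r) u
  refine le_csSup (bddAbove_cliqueHeight v) ⟨insert u s, ?_, ?_⟩
  · exact hs.insert fun x hx => (hbelow x hx).2.symm
  · intro x hx
    rcases Finset.mem_insert.mp hx with rfl | hx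
    · exact ⟨huv, hadj⟩
    · obtain ⟨hxu, hGxu⟩ := hbelow x hx
      exact ⟨trans_of r hxu huv, htrans x u v hxu huv hGxu hadj⟩

/-- `G` is the comparability graph of the strict order `fun x y => r x y ∧ G.Adj x y`; as in
Mirsky's theorem, colouring each vertex by the size of the largest clique below it is proper. -/
lemma colorable_gOmega_of_transitive [IsStrictTotalOrder V r]
    (htrans : ∀ x y z, r x y → r y z → G.Adj x y → G.Adj y z → G.Adj x z) :
    G.Colorable (gOmega G) := by
  refine (SimpleGraph.colorable_iff_exists_bdd_nat_coloring _).mpr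
    ⟨SimpleGraph.Coloring.mk (cliqueHeight G r) fun {u v} hadj heq => ?_,
      cliqueHeight_lt_gOmega⟩
  rcases trichotomous_of r u v with h | rfl | h
  · exact (cliqueHeight_lt_of_adj htrans h hadj).ne heq
  · exact hadj.ne rfl
  · exact (cliqueHeight_lt_of_adj htrans h hadj.symm).ne heq.symm

end CliqueHeight

namespace Dig

variable (D : Dig V) (r : V → V → Prop)

@[simp]
lemma backedge_adj {u v : V} :
    (D.backedge r).Adj u v ↔ (r u v ∧ D.Adj v u) ∨ (r v u ∧ D.Adj u v) :=
  Iff.rfl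

lemma acyclicOn_of_coloring [IsStrictTotalOrder V r] {α : Type*}
    (C : (D.backedge r).Coloring α) (i : α) : D.AcyclicOn {v | C v = i} := by
  intro v hv
  refine irrefl_of r v (Relation.transGen_minimal (fun x y ⟨hx, hy, hxy⟩ => ?_) _ _ hv)
  rcases trichotomous_of r x y with h | rfl | h
  · exact h
  · exact absurd hxy (D.irrefl x)
  · exact absurd (hx.trans hy.symm) (C.valid (Or.inr ⟨h, hxy⟩))

lemma exists_acyclic_partition_dichi [Fintype V] :
    ∃ c : V → Fin D.dichi, ∀ i, D.AcyclicOn {v | c v = i} := by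
  obtain ⟨C⟩ := (D.backedge WellOrderingRel).colorable_of_fintype
  exact Nat.sInf_mem (s := {n | ∃ c : V → Fin n, ∀ i, D.AcyclicOn {v | c v = i}})
    ⟨_, C, D.acyclicOn_of_coloring WellOrderingRel C⟩

lemma dichi_le_gChi_backedge [Fintype V] [IsStrictTotalOrder V r] :
    D.dichi ≤ gChi (D.backedge r) := by
  obtain ⟨C⟩ := colorable_gChi (D.backedge r)
  exact Nat.sInf_le ⟨C, D.acyclicOn_of_coloring r C⟩

lemma cliqueNum_le [IsStrictTotalOrder V r] : D.cliqueNum ≤ gOmega (D.backedge r) :=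
  Nat.sInf_le ⟨r, inferInstance, rfl⟩

lemma exists_gOmega_backedge_eq_cliqueNum :
    ∃ r, IsStrictTotalOrder V r ∧ gOmega (D.backedge r) = D.cliqueNum :=
  Nat.sInf_mem (s := {m | ∃ r, IsStrictTotalOrder V r ∧ gOmega (D.backedge r) = m})
    ⟨_, WellOrderingRel, inferInstance, rfl⟩

end Dig

namespace Tournament

section

variable (T : Tournament V) (r : V → V → Prop) [IsStrictTotalOrder V r]

lemma adj_iff_not_adj {a b : V} (hab : a ≠ b) : T.Adj a b ↔ ¬ T.Adj b a :=
  ⟨T.asymm a b, (T.total a b hab).resolve_right⟩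

lemma adj_iff (a b : V) :
    T.Adj a b ↔ (r a b ∧ ¬ (T.backedge r).Adj a b) ∨ (r b a ∧ (T.backedge r).Adj a b) := by
  rcases trichotomous_of r a b with h | rfl | h
  · simp [h, asymm_of r h, T.adj_iff_not_adj (ne_of_irrefl h)]
  · simp [T.irrefl, irrefl_of r]
  · simp [h, asymm_of r h]

lemma backedge_trans_of_acyclicOn {S : Set V} (hS : T.AcyclicOn S) {x y z : V}
    (hx : x ∈ S) (hy : y ∈ S) (hz : z ∈ S) (hxy : r x y) (hyz : r y z)
    (h₁ : (T.backedge r).Adj x y) (h₂ : (T.backedge r).Adj y z) : (T.backedge r).Adj x z := by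
  have hxz := trans_of r hxy hyz
  have hyx : T.Adj y x := (T.adj_iff r y x).2 (Or.inr ⟨hxy, h₁.symm⟩)
  have hzy : T.Adj z y := (T.adj_iff r z y).2 (Or.inr ⟨hyz, h₂.symm⟩)
  -- otherwise `x → z → y → x` is a directed cycle inside `S`
  by_contra hback
  have hxz' : T.Adj x z := (T.adj_iff r x z).2 (Or.inl ⟨hxz, hback⟩)
  exact hS x <| .head ⟨hx, hz, hxz'⟩ <| .head ⟨hz, hy, hzy⟩ <| .single ⟨hy, hx, hyx⟩

end

section

variable (G : SimpleGraph V) (r : V → V → Prop) [IsStrictTotalOrder V r]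

def ofBackedgeGraph : Tournament V where
  Adj u v := (r u v ∧ ¬ G.Adj u v) ∨ (r v u ∧ G.Adj u v)
  irrefl v := by simp [irrefl_of r]
  asymm u v := by
    rintro (⟨h, hG⟩ | ⟨h, hG⟩) (⟨h', hG'⟩ | ⟨h', hG'⟩)
    · exact asymm_of r h h'
    · exact hG hG'.symm
    · exact hG' hG.symm
    · exact asymm_of r h h'
  total u v huv := by
    rcases trichotomous_of r u v with h | rfl | h
    · by_cases hG : G.Adj u v <;> simp [h, hG, G.adj_comm]
    · exact absurd rfl huv
    · by_cases hG : G.Adj u v <;> simp [h, hG, G.adj_comm]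

@[simp]
lemma backedge_ofBackedgeGraph : (ofBackedgeGraph G r).backedge r = G := by
  ext u v
  rcases trichotomous_of r u v with h | rfl | h
  · simp [ofBackedgeGraph, h, asymm_of r h, G.adj_comm]
  · simp
  · simp [ofBackedgeGraph, h, asymm_of r h, G.adj_comm]

end

section

variable [Fintype V] (T : Tournament V) (r : V → V → Prop) [IsStrictTotalOrder V r]

lemma colorable_backedge_of_acyclic_partition {k : ℕ} (c : V → Fin k)
    (hc : ∀ i, T.AcyclicOn {v | c v = i}) :
    (T.backedge r).Colorable (k * gOmega (T.backedge r)) := by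
  refine SimpleGraph.colorable_mul_of_colorable_sameClass c <|
    (colorable_gOmega_of_transitive (r := r) ?_).mono (gOmega_mono inf_le_left)
  rintro x y z hxy hyz ⟨h₁, -, hc₁⟩ ⟨h₂, -, hc₂⟩
  have hcxy : c x = c y := hc₁.elim id Eq.symm
  have hcyz : c y = c z := hc₂.elim id Eq.symm
  have hxz := T.backedge_trans_of_acyclicOn r (hc (c x)) rfl hcxy.symm (hcxy.trans hcyz).symm
    hxy hyz h₁ h₂
  exact ⟨hxz, hxz.ne, Or.inl (hcxy.trans hcyz)⟩

lemma gChi_backedge_le :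
    gChi (T.backedge r) ≤ T.dichi * gOmega (T.backedge r) := by
  obtain ⟨c, hc⟩ := T.exists_acyclic_partition_dichi
  exact gChi_le_of_colorable (T.colorable_backedge_of_acyclic_partition r c hc)

end

end Tournament

section OrderedBackedge

variable {W : Type*} (H : Tournament W)

def ContainsOrderedBackedge (G : SimpleGraph V) (r : V → V → Prop) : Prop :=
  ∃ rH : W → W → Prop, IsStrictTotalOrder W rH ∧ OrderedContains (H.backedge rH) rH G r

def OrderedChiBinding : Prop :=
  ∃ f : ℕ → ℕ, ∀ (V : Type) [Fintype V] (G : SimpleGraph V) (r : V → V → Prop),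
    IsStrictTotalOrder V r → ¬ ContainsOrderedBackedge H G r → gChi G ≤ f (gOmega G)

variable {H}

lemma HFree.not_containsOrderedBackedge {T : Tournament V} (hT : HFree H T)
    (r : V → V → Prop) [IsStrictTotalOrder V r] :
    ¬ ContainsOrderedBackedge H (T.backedge r) r := by
  rintro ⟨rH, hrH, φ, hord, hadj⟩
  exact hT ⟨φ, fun a b => by rw [H.adj_iff rH, T.adj_iff r, hord, hord, hadj]⟩

lemma hFree_ofBackedgeGraph {G : SimpleGraph V} {r : V → V → Prop} [IsStrictTotalOrder V r]
    (hG : ¬ ContainsOrderedBackedge H G r) : HFree H (Tournament.ofBackedgeGraph G r) := by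
  rintro ⟨φ, hφ⟩
  refine hG ⟨Function.onFun r φ, φ.injective.isStrictTotalOrder_onFun (r := r), φ,
    fun _ _ => Iff.rfl, fun a b => ?_⟩
  conv_rhs => rw [← Tournament.backedge_ofBackedgeGraph G r]
  simp only [Dig.backedge_adj, hφ, Function.onFun]

theorem ChiBinding.orderedChiBinding (hH : ChiBinding H) : OrderedChiBinding H := by
  obtain ⟨f, hf⟩ := hH
  refine ⟨fun n => (Finset.range (n + 1)).sup f * n, fun V _ G r _ hG => ?_⟩
  set T := Tournament.ofBackedgeGraph G r
  have hTG : T.backedge r = G := Tournament.backedge_ofBackedgeGraph G r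
  have hdichi : T.dichi ≤ (Finset.range (gOmega G + 1)).sup f := by
    refine (hf V T (hFree_ofBackedgeGraph hG)).trans (Finset.le_sup ?_)
    simpa [Nat.lt_succ_iff, hTG] using T.cliqueNum_le r
  calc gChi G ≤ T.dichi * gOmega G := hTG ▸ T.gChi_backedge_le r
    _ ≤ _ := Nat.mul_le_mul_right _ hdichi

theorem OrderedChiBinding.chiBinding (hH : OrderedChiBinding H) : ChiBinding H := by
  obtain ⟨f, hf⟩ := hH
  refine ⟨f, fun V _ T hT => ?_⟩
  obtain ⟨r, hr, hω⟩ := T.exists_gOmega_backedge_eq_cliqueNum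
  calc T.dichi ≤ gChi (T.backedge r) := T.dichi_le_gChi_backedge r
    _ ≤ f (gOmega (T.backedge r)) := hf V _ r hr (hT.not_containsOrderedBackedge r)
    _ = f T.cliqueNum := by rw [hω]

end OrderedBackedge

theorem stmt_15_general (W : Type) (H : Tournament W) :
    ChiBinding H ↔
      (∃ f : ℕ → ℕ, ∀ (V : Type) [Fintype V] (G : SimpleGraph V) (r : V → V → Prop),
        IsStrictTotalOrder V r →
        (¬ ∃ rH : W → W → Prop, IsStrictTotalOrder W rH ∧
            OrderedContains (H.toDig.backedge rH) rH G r) →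
        gChi G ≤ f (gOmega G)) :=
  ⟨ChiBinding.orderedChiBinding, OrderedChiBinding.chiBinding⟩

/-- The class of `H`-free tournaments is χ⃗-bounded if and only if the class of ordered graphs
containing no ordered backedge graph of `H` as an induced ordered subgraph is χ-bounded. -/
theorem stmt_15 (W : Type) [Fintype W] (H : Tournament W) :
    ChiBinding H ↔
      (∃ f : ℕ → ℕ, ∀ (V : Type) [Fintype V] (G : SimpleGraph V) (r : V → V → Prop),
        IsStrictTotalOrder V r →
        (¬ ∃ rH : W → W → Prop, IsStrictTotalOrder W rH ∧
            OrderedContains (H.toDig.backedge rH) rH G r) →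
        gChi G ≤ f (gOmega G)) :=
  stmt_15_general W H
end
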